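/- Let L be a finitely generated abelian group and A = ⊕_{n∈L} A_n a noetherian L-graded commutative ring. Then A is a finitely generated A_0-algebra. -/

import Mathlib

/-!
Induct on a finite generating set of `L`, showing that for each finitely generated `H ≤ L` the
subring `A_H = ⊕_{n ∈ H} A_n` lies in a finitely generated `A₀`-subalgebra. To pass from `H` to
`H + ℤg`, regrade `A` along `L → L/H` and let `C_k` be the component of degree `k • ḡ`, so that
`C_0 = A_H`. Projecting onto a coarse degree commutes with multiplication by coarse-homogeneous
elements, so a relation `a = ∑ fᵢ xᵢ` with `a, xᵢ` coarse-homogeneous can be replaced by one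
with coarse-homogeneous coefficients. Noetherianity then gives: each `C_k` is a finitely generated
`C_0`-module, and the ideal generated by all `C_k`, `k > 0`, is generated by finitely many
`xᵢ ∈ C_{dᵢ}` with `0 < dᵢ ≤ D`. Every element of `C_n`, `n > D`, is thus a combination of the
`xᵢ` with coefficients in `C_{n-dᵢ}`, and induction on `n` puts all `C_n`, `n ≥ 0`, in the
algebra generated by `A_H`, the `xᵢ` and module generators of `C_0, …, C_D`. The same for `-g`
handles `k < 0`.
-/

variable {L A : Type*} [AddCommGroup L] [DecidableEq L] [CommRing A]
variable (𝒜 : L → AddSubgroup A) [GradedRing 𝒜]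

/-- The degree-zero subring `A₀` acts on `A` by multiplication, making `A` an
`A₀`-algebra. -/
instance gradeZeroAlgebra : Algebra (𝒜 0) A :=
  RingHom.toAlgebra
    { toFun := Subtype.val, map_one' := rfl, map_mul' := fun _ _ => rfl,
      map_zero' := rfl, map_add' := fun _ _ => rfl }

open DirectSum

namespace GradedRing

section Supported

def supported (S : Set L) : AddSubgroup A where
  carrier := {x | ∀ n ∉ S, decompose 𝒜 x n = 0}
  zero_mem' n _ := by simp
  add_mem' ha hb n hn := by simp [ha n hn, hb n hn]
  neg_mem' ha n hn := by rw [decompose_neg, DFinsupp.neg_apply, ha n hn, neg_zero]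

variable {𝒜}

theorem mem_supported_univ (x : A) : x ∈ supported 𝒜 Set.univ :=
  fun _ hn => absurd trivial hn

theorem mem_supported_of_mem {S : Set L} {n : L} {x : A} (hn : n ∈ S) (hx : x ∈ 𝒜 n) :
    x ∈ supported 𝒜 S :=
  fun _ hm => Subtype.ext (decompose_of_mem_ne 𝒜 hx fun h => hm (h ▸ hn))

theorem supported_subset {σ : Type*} [SetLike σ A] [AddSubmonoidClass σ A] {B : σ} {S : Set L}
    (h : ∀ n ∈ S, (𝒜 n : Set A) ⊆ B) : (supported 𝒜 S : Set A) ⊆ B := by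
  classical
  intro x hx
  rw [← sum_support_decompose 𝒜 x]
  refine sum_mem fun n hn => h n ?_ (decompose 𝒜 x n).2
  by_contra hnS
  exact DFinsupp.mem_support_iff.1 hn (hx n hnS)

variable (𝒜) in
open scoped Classical in
noncomputable def projOn (S : Set L) : A →+ A :=
  (decomposeAddEquiv 𝒜).symm.toAddMonoidHom.comp
    ((DFinsupp.filterAddMonoidHom (fun n => 𝒜 n) (· ∈ S)).comp
      (decomposeAddEquiv 𝒜).toAddMonoidHom)

open scoped Classical in
theorem decompose_projOn (S : Set L) (x : A) (n : L) :
    decompose 𝒜 (projOn 𝒜 S x) n = if n ∈ S then decompose 𝒜 x n else 0 := by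
  simp [projOn, decomposeAddEquiv, DFinsupp.filter_apply]

theorem projOn_eq_self {S : Set L} {x : A} (hx : x ∈ supported 𝒜 S) : projOn 𝒜 S x = x := by
  classical
  refine (decompose 𝒜).injective (DFinsupp.ext fun n => ?_)
  rw [decompose_projOn]
  split_ifs with hn
  · rfl
  · exact (hx n hn).symm

theorem projOn_mem (S : Set L) (x : A) : projOn 𝒜 S x ∈ supported 𝒜 S := by
  classical
  intro n hn
  rw [decompose_projOn, if_neg hn]

theorem supported_bot_subset_adjoin :
    (supported 𝒜 ((⊥ : AddSubgroup L) : Set L) : Set A) ⊆ Algebra.adjoin (𝒜 0) (∅ : Set A) :=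
  supported_subset fun n hn x hx => by
    obtain rfl : n = 0 := hn
    exact Subalgebra.algebraMap_mem _ (⟨x, hx⟩ : 𝒜 0)

end Supported

section Coarse

variable {M : Type*} [AddCommGroup M]

/-- The component of degree `q` of `A` regraded along `φ`. -/
def coarseGrade (φ : L →+ M) (q : M) : AddSubgroup A :=
  supported 𝒜 (φ ⁻¹' {q})

variable {𝒜} {φ : L →+ M}

theorem mem_coarseGrade_of_mem {n : L} {x : A} (hx : x ∈ 𝒜 n) : x ∈ coarseGrade 𝒜 φ (φ n) :=
  mem_supported_of_mem rfl hx

theorem projOn_mul_of_mem {m : L} {x : A} (hx : x ∈ 𝒜 m) (q : M) (b : A) :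
    projOn 𝒜 (φ ⁻¹' {q}) (b * x) = projOn 𝒜 (φ ⁻¹' {q - φ m}) b * x := by
  classical
  refine (decompose 𝒜).injective (DFinsupp.ext fun n => Subtype.ext ?_)
  have hshift : ∀ c : A, (decompose 𝒜 (c * x) n : A) = decompose 𝒜 c (n - m) * x := fun c => by
    rw [← coe_decompose_mul_add_of_right_mem 𝒜 hx, sub_add_cancel]
  rw [hshift, decompose_projOn, decompose_projOn]
  simp only [Set.mem_preimage, Set.mem_singleton_iff, map_sub, sub_left_inj]
  split_ifs
  · exact hshift b
  · simp

theorem projOn_mul_of_mem_coarseGrade {p : M} {x : A} (hx : x ∈ coarseGrade 𝒜 φ p) (q : M)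
    (b : A) : projOn 𝒜 (φ ⁻¹' {q}) (b * x) = projOn 𝒜 (φ ⁻¹' {q - p}) b * x := by
  classical
  rw [← sum_support_decompose 𝒜 x, Finset.mul_sum, map_sum, Finset.mul_sum]
  refine Finset.sum_congr rfl fun n hn => ?_
  have hnp : φ n = p := by
    by_contra h
    exact DFinsupp.mem_support_iff.1 hn (hx n h)
  rw [projOn_mul_of_mem (decompose 𝒜 x n).2, hnp]

theorem exists_eq_sum_mul_of_mem_span {t : Finset A} {δ : A → M}
    (ht : ∀ x ∈ t, x ∈ coarseGrade 𝒜 φ (δ x)) {q : M} {a : A} (ha : a ∈ coarseGrade 𝒜 φ q)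
    (hspan : a ∈ Ideal.span (t : Set A)) :
    ∃ c : A → A, (∀ x ∈ t, c x ∈ coarseGrade 𝒜 φ (q - δ x)) ∧ a = ∑ x ∈ t, c x * x := by
  obtain ⟨f, -, hf⟩ := Submodule.mem_span_finset.1 hspan
  refine ⟨fun x => projOn 𝒜 (φ ⁻¹' {q - δ x}) (f x), fun x _ => projOn_mem _ _, ?_⟩
  calc a = projOn 𝒜 (φ ⁻¹' {q}) (∑ x ∈ t, f x * x) := by
        simp only [← smul_eq_mul, hf, projOn_eq_self ha]
    _ = _ := by
      rw [map_sum]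
      exact Finset.sum_congr rfl fun x hx => projOn_mul_of_mem_coarseGrade (ht x hx) q (f x)

theorem coarseGrade_nsmul_subset_of_subset_span {B : Subalgebra (𝒜 0) A} {q : M} {X : Finset A}
    {d : A → ℕ} {D : ℕ} (hXB : (X : Set A) ⊆ B) (hX : ∀ x ∈ X, x ∈ coarseGrade 𝒜 φ (d x • q))
    (hd : ∀ x ∈ X, 0 < d x ∧ d x ≤ D)
    (hspan : ∀ n, D < n → (coarseGrade 𝒜 φ (n • q) : Set A) ⊆ Ideal.span (X : Set A))
    (hbase : ∀ n ≤ D, (coarseGrade 𝒜 φ (n • q) : Set A) ⊆ B) (n : ℕ) :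
    (coarseGrade 𝒜 φ (n • q) : Set A) ⊆ B := by
  induction n using Nat.strong_induction_on with
  | _ n ih =>
  rcases le_or_gt n D with hn | hn
  · exact hbase n hn
  intro a ha
  obtain ⟨c, hc, rfl⟩ := exists_eq_sum_mul_of_mem_span hX ha (hspan n hn ha)
  refine Subalgebra.sum_mem _ fun x hx => Subalgebra.mul_mem _ ?_ (hXB hx)
  obtain ⟨hdx, hdD⟩ := hd x hx
  refine ih (n - d x) (by omega) ?_
  rw [sub_nsmul _ (by omega : d x ≤ n), ← sub_eq_add_neg]
  exact hc x hx

variable [IsNoetherianRing A]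

theorem exists_finite_coarseGrade_subset_adjoin {s : Set A}
    (h0 : (coarseGrade 𝒜 φ 0 : Set A) ⊆ Algebra.adjoin (𝒜 0) s) (q : M) :
    ∃ u : Set A, u.Finite ∧ (coarseGrade 𝒜 φ q : Set A) ⊆ Algebra.adjoin (𝒜 0) (s ∪ u) := by
  obtain ⟨u, hu, hspan⟩ := (Submodule.fg_span_iff_fg_span_finset_subset
    (coarseGrade 𝒜 φ q : Set A)).1 (IsNoetherian.noetherian (R := A) _)
  refine ⟨u, u.finite_toSet, fun a ha => ?_⟩
  have ha' : a ∈ Ideal.span (u : Set A) := by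
    rw [Ideal.span, ← hspan]
    exact Submodule.subset_span ha
  obtain ⟨c, hc, rfl⟩ := exists_eq_sum_mul_of_mem_span (fun x hx => hu hx) ha ha'
  refine Subalgebra.sum_mem _ fun x hx => Subalgebra.mul_mem _ ?_ ?_
  · refine Algebra.adjoin_mono Set.subset_union_left (h0 ?_)
    simpa using hc x hx
  · exact Algebra.subset_adjoin (Set.mem_union_right _ hx)

theorem exists_finite_forall_coarseGrade_nsmul_subset_adjoin {s : Set A} (hs : s.Finite)
    (h0 : (coarseGrade 𝒜 φ 0 : Set A) ⊆ Algebra.adjoin (𝒜 0) s) (q : M) :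
    ∃ t : Set A, t.Finite ∧
      ∀ n : ℕ, (coarseGrade 𝒜 φ (n • q) : Set A) ⊆ Algebra.adjoin (𝒜 0) t := by
  obtain ⟨X, hXU, hspan⟩ := (Submodule.fg_span_iff_fg_span_finset_subset
    (⋃ n > 0, (coarseGrade 𝒜 φ (n • q) : Set A))).1 (IsNoetherian.noetherian (R := A) _)
  have hX : ∀ x ∈ X, ∃ n > 0, x ∈ coarseGrade 𝒜 φ (n • q) := by
    simpa [Set.subset_def] using hXU
  choose! d hd0 hdX using hX
  choose u hu_fin hu using fun n : ℕ => exists_finite_coarseGrade_subset_adjoin h0 (n • q)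
  set D := X.sup d
  refine ⟨s ∪ X ∪ ⋃ n ≤ D, u n,
    (hs.union X.finite_toSet).union (Set.finite_le_nat D |>.biUnion fun n _ => hu_fin n), ?_⟩
  refine coarseGrade_nsmul_subset_of_subset_span (D := D)
    (fun x hx => Algebra.subset_adjoin (by simp [hx])) hdX
    (fun x hx => ⟨hd0 x hx, Finset.le_sup hx⟩) (fun n _ a ha => ?_) (fun n hn => ?_)
  · rw [Ideal.span, ← hspan]
    exact Submodule.subset_span (Set.mem_iUnion₂.2 ⟨n, by omega, ha⟩)
  · refine (hu n).trans (Algebra.adjoin_mono (Set.union_subset ?_ ?_))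
    · exact Set.subset_union_left.trans Set.subset_union_left
    · exact (Set.subset_iUnion₂ (s := fun n _ => u n) n hn).trans Set.subset_union_right

theorem exists_finite_forall_coarseGrade_zsmul_subset_adjoin {s : Set A} (hs : s.Finite)
    (h0 : (coarseGrade 𝒜 φ 0 : Set A) ⊆ Algebra.adjoin (𝒜 0) s) (q : M) :
    ∃ t : Set A, t.Finite ∧
      ∀ z : ℤ, (coarseGrade 𝒜 φ (z • q) : Set A) ⊆ Algebra.adjoin (𝒜 0) t := by
  obtain ⟨t₁, ht₁, h₁⟩ := exists_finite_forall_coarseGrade_nsmul_subset_adjoin hs h0 q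
  obtain ⟨t₂, ht₂, h₂⟩ := exists_finite_forall_coarseGrade_nsmul_subset_adjoin hs h0 (-q)
  refine ⟨t₁ ∪ t₂, ht₁.union ht₂, fun z => ?_⟩
  obtain ⟨n, rfl | rfl⟩ := Int.eq_nat_or_neg z
  · rw [natCast_zsmul]
    exact (h₁ n).trans (Algebra.adjoin_mono Set.subset_union_left)
  · rw [neg_zsmul, natCast_zsmul, ← smul_neg]
    exact (h₂ n).trans (Algebra.adjoin_mono Set.subset_union_right)

end Coarse

section Subgroup

variable {𝒜} [IsNoetherianRing A]

theorem exists_finite_supported_sup_zmultiples_subset_adjoin {H : AddSubgroup L} {s : Set A}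
    (hs : s.Finite) (hH : (supported 𝒜 H : Set A) ⊆ Algebra.adjoin (𝒜 0) s) (g : L) :
    ∃ t : Set A, t.Finite ∧
      (supported 𝒜 ↑(H ⊔ AddSubgroup.zmultiples g) : Set A) ⊆ Algebra.adjoin (𝒜 0) t := by
  set φ := QuotientAddGroup.mk' H
  have h0 : (coarseGrade 𝒜 φ 0 : Set A) ⊆ Algebra.adjoin (𝒜 0) s := by
    have hker : φ ⁻¹' {0} = H := by
      ext n
      simp [φ]
    rwa [coarseGrade, hker]
  obtain ⟨t, ht, hzt⟩ := exists_finite_forall_coarseGrade_zsmul_subset_adjoin hs h0 (φ g)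
  refine ⟨t, ht, supported_subset fun n hn x hx => ?_⟩
  obtain ⟨h, hh, _, ⟨z, rfl⟩, rfl⟩ := AddSubgroup.mem_sup.1 hn
  have hφ : φ (h + z • g) = z • φ g := by
    simp [φ, (QuotientAddGroup.eq_zero_iff h).2 hh]
  exact hzt z (hφ ▸ mem_coarseGrade_of_mem hx)

theorem exists_finite_supported_closure_subset_adjoin (S : Finset L) :
    ∃ t : Set A, t.Finite ∧
      (supported 𝒜 (AddSubgroup.closure (S : Set L)) : Set A) ⊆ Algebra.adjoin (𝒜 0) t := by
  induction S using Finset.induction_on with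
  | empty => exact ⟨∅, Set.finite_empty, by simpa using supported_bot_subset_adjoin⟩
  | insert g S _ ih =>
    obtain ⟨s, hs, hS⟩ := ih
    rw [Finset.coe_insert, Set.insert_eq, AddSubgroup.closure_union,
      ← AddSubgroup.zmultiples_eq_closure, sup_comm]
    exact exists_finite_supported_sup_zmultiples_subset_adjoin hs hS g

end Subgroup

end GradedRing

open GradedRing in
theorem graded_noetherian_finiteType [AddGroup.FG L] [IsNoetherianRing A] :
    Algebra.FiniteType (𝒜 0) A := by
  obtain ⟨S, hS⟩ := AddGroup.FG.out (H := L)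
  obtain ⟨t, ht, hsub⟩ := exists_finite_supported_closure_subset_adjoin (𝒜 := 𝒜) S
  rw [hS] at hsub
  exact ⟨Subalgebra.fg_def.2 ⟨t, ht, eq_top_iff.2 fun a _ => hsub (mem_supported_univ a)⟩⟩
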